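/- If E(k) ≥ Ê(k) ≥ ‖Y_k - Y_k^*‖₂ (spectral norm bounded by the error bound) and E(k) ≤ (1/2) min_{j>k} |σ_k^* - σ_j^*|, then by Weyl's inequality the gap quantities satisfy T_k ≥ (1/2) T_k^*, where T_k = min{min_{j>k} |σ_k^* - σ_{j_k}|, σ_k^*} and T_k^* = min{min_{j>k} |σ_k^* - σ_j^*|, σ_k^*}. -/
import Mathlib


/-- Largest singular value (spectral norm) of a real matrix. -/
noncomputable def specNorm {m n : ℕ} (A : Matrix (Fin m) (Fin n) ℝ) : ℝ :=
  ‖LinearMap.toContinuousLinearMap (Matrix.toEuclideanLin A)‖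

/-- The `(i+1)`-th largest singular value of `A`, via the Courant–Fischer min-max
characterization. -/
noncomputable def sval {m n : ℕ} (A : Matrix (Fin m) (Fin n) ℝ) (i : ℕ) : ℝ :=
  sInf { c : ℝ | ∃ V : Submodule ℝ (EuclideanSpace ℝ (Fin n)),
    Module.finrank ℝ V = n - i ∧ ∀ x ∈ V, ‖Matrix.toEuclideanLin A x‖ ≤ c * ‖x‖ }

lemma exists_submodule_finrank (n i : ℕ) :
    ∃ V : Submodule ℝ (EuclideanSpace ℝ (Fin n)), Module.finrank ℝ V = n - i := by
  obtain ⟨f, hf⟩ := exists_linearIndependent_of_le_finrank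
    (R := ℝ) (M := EuclideanSpace ℝ (Fin n)) (n := n - i)
    (by rw [finrank_euclideanSpace_fin]; omega)
  exact ⟨Submodule.span ℝ (Set.range f), by
    rw [finrank_span_eq_card hf, Fintype.card_fin]⟩

lemma specNorm_apply_le {m n : ℕ} (A : Matrix (Fin m) (Fin n) ℝ)
    (x : EuclideanSpace ℝ (Fin n)) :
    ‖Matrix.toEuclideanLin A x‖ ≤ specNorm A * ‖x‖ := by
  have := (LinearMap.toContinuousLinearMap (Matrix.toEuclideanLin A)).le_opNorm x
  simpa [specNorm] using this

lemma sval_set_nonempty {m n : ℕ} (A : Matrix (Fin m) (Fin n) ℝ) (i : ℕ) :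
    Set.Nonempty { c : ℝ | ∃ V : Submodule ℝ (EuclideanSpace ℝ (Fin n)),
      Module.finrank ℝ V = n - i ∧ ∀ x ∈ V, ‖Matrix.toEuclideanLin A x‖ ≤ c * ‖x‖ } := by
  obtain ⟨V, hV⟩ := exists_submodule_finrank n i
  exact ⟨specNorm A, V, hV, fun x _ => specNorm_apply_le A x⟩

lemma sval_set_bddBelow {m n : ℕ} (A : Matrix (Fin m) (Fin n) ℝ) (i : ℕ) (hi : i < n) :
    ∀ c ∈ { c : ℝ | ∃ V : Submodule ℝ (EuclideanSpace ℝ (Fin n)),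
      Module.finrank ℝ V = n - i ∧ ∀ x ∈ V, ‖Matrix.toEuclideanLin A x‖ ≤ c * ‖x‖ },
      (0 : ℝ) ≤ c := by
  rintro c ⟨V, hV, hc⟩
  have hVbot : V ≠ ⊥ := by
    intro h
    rw [h, finrank_bot] at hV
    omega
  obtain ⟨x, hxV, hx0⟩ := Submodule.exists_mem_ne_zero_of_ne_bot hVbot
  have h1 := hc x hxV
  have hx : (0:ℝ) < ‖x‖ := norm_pos_iff.mpr hx0
  nlinarith [norm_nonneg (Matrix.toEuclideanLin A x)]

lemma sval_nonneg {m n : ℕ} (A : Matrix (Fin m) (Fin n) ℝ) (i : ℕ) (hi : i < n) :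
    0 ≤ sval A i :=
  Real.sInf_nonneg (sval_set_bddBelow A i hi)

lemma sval_weyl {m n : ℕ} (A B : Matrix (Fin m) (Fin n) ℝ) (i : ℕ) (hi : i < n) :
    sval A i ≤ sval B i + specNorm (A - B) := by
  have key : ∀ c ∈ { c : ℝ | ∃ V : Submodule ℝ (EuclideanSpace ℝ (Fin n)),
      Module.finrank ℝ V = n - i ∧ ∀ x ∈ V, ‖Matrix.toEuclideanLin B x‖ ≤ c * ‖x‖ },
      sval A i - specNorm (A - B) ≤ c := by
    rintro c ⟨V, hV, hc⟩
    have hmem : c + specNorm (A - B) ∈ { c : ℝ | ∃ V : Submodule ℝ (EuclideanSpace ℝ (Fin n)),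
        Module.finrank ℝ V = n - i ∧ ∀ x ∈ V, ‖Matrix.toEuclideanLin A x‖ ≤ c * ‖x‖ } := by
      refine ⟨V, hV, fun x hx => ?_⟩
      have hAB : Matrix.toEuclideanLin A x
          = Matrix.toEuclideanLin B x + Matrix.toEuclideanLin (A - B) x := by
        rw [map_sub]; simp
      calc ‖Matrix.toEuclideanLin A x‖
          ≤ ‖Matrix.toEuclideanLin B x‖ + ‖Matrix.toEuclideanLin (A - B) x‖ := by
            rw [hAB]; exact norm_add_le _ _
        _ ≤ c * ‖x‖ + specNorm (A - B) * ‖x‖ :=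
            add_le_add (hc x hx) (specNorm_apply_le _ x)
        _ = (c + specNorm (A - B)) * ‖x‖ := by ring
    have := csInf_le ⟨0, fun c hc => sval_set_bddBelow A i hi c hc⟩ hmem
    unfold sval
    linarith
  have := le_csInf (sval_set_nonempty B i) key
  unfold sval at this ⊢
  linarith

lemma specNorm_sub_comm {m n : ℕ} (A B : Matrix (Fin m) (Fin n) ℝ) :
    specNorm (A - B) = specNorm (B - A) := by
  unfold specNorm
  rw [(neg_sub A B).symm, map_neg, map_neg, norm_neg]

/-- If `‖Y_k - Y_k*‖₂ ≤ Ê(k) ≤ E(k)` and `E(k) ≤ (1/2) min_{j>k}|σ_k* - σ_j*|`, then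
by Weyl's inequality `T_k ≥ (1/2) T_k*`, where
`T_k = min{min_{j>k} |σ_k* - σ_{j_k}|, σ_k*}` and
`T_k* = min{min_{j>k} |σ_k* - σ_j*|, σ_k*}`. Here `σ_k* = σ_0(Y_k*)` is the top
singular value of `Y_k*`, the `σ_j*` are its other singular values, and `σ_{j_k}` are
the singular values of `Y_k`; the minima over `j > k` range over a nonempty finite
index set `S`. -/
theorem gap_half_bound {m n : ℕ}
    (Yks Yk : Matrix (Fin m) (Fin n) ℝ)
    (S : Finset ℕ) (hS : S.Nonempty) (hS1 : ∀ i ∈ S, 1 ≤ i ∧ i < min m n)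
    (E Ehat : ℝ)
    (h1 : specNorm (Yk - Yks) ≤ Ehat) (h2 : Ehat ≤ E)
    (h3 : E ≤ (1 / 2) * S.inf' hS (fun j => |sval Yks 0 - sval Yks j|)) :
    (1 / 2) * min (S.inf' hS fun j => |sval Yks 0 - sval Yks j|) (sval Yks 0)
      ≤ min (S.inf' hS fun j => |sval Yks 0 - sval Yk j|) (sval Yks 0) := by
  set G := S.inf' hS fun j => |sval Yks 0 - sval Yks j| with hGdef
  obtain ⟨j0, hj0⟩ := hS
  have hj0' := hS1 j0 hj0
  have hn : 2 ≤ n := by omega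
  have hσ : 0 ≤ sval Yks 0 := sval_nonneg _ _ (by omega)
  have hG0 : 0 ≤ G := Finset.le_inf' _ _ (fun j hj => abs_nonneg _)
  have hδE : specNorm (Yk - Yks) ≤ E := h1.trans h2
  apply le_min
  · apply Finset.le_inf'
    intro j hj
    have hjn : j < n := lt_of_lt_of_le (hS1 j hj).2 (min_le_right m n)
    have hw1 : sval Yk j ≤ sval Yks j + specNorm (Yk - Yks) := sval_weyl _ _ _ hjn
    have hw2 : sval Yks j ≤ sval Yk j + specNorm (Yk - Yks) := by
      have := sval_weyl Yks Yk j hjn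
      rwa [specNorm_sub_comm Yks Yk] at this
    have hGj : G ≤ |sval Yks 0 - sval Yks j| := Finset.inf'_le _ hj
    have htri : |sval Yks 0 - sval Yks j|
        ≤ |sval Yks 0 - sval Yk j| + |sval Yk j - sval Yks j| :=
      abs_sub_le _ _ _
    have habs : |sval Yk j - sval Yks j| ≤ specNorm (Yk - Yks) := by
      rw [abs_sub_le_iff]
      constructor <;> linarith
    have hmin : min G (sval Yks 0) ≤ G := min_le_left _ _
    linarith
  · have hmin1 : min G (sval Yks 0) ≤ sval Yks 0 := min_le_right _ _
    have hmin2 : 0 ≤ min G (sval Yks 0) := le_min hG0 hσ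
    linarith
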